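/- arXiv:1008.0673 — 5 statements merged into one kernel-verified Lean document; each statement's English description precedes it below -/
import Mathlib

section
/- Let Λ be a finitely generated distributive lattice with generators λ_0, …, λ_N. If for all non-empty proper subsets I, J ⊊ {0,…,N} the elements ⋁_{i∈I} λ_i are meet irreducible and satisfy ⋁_{i∈I} λ_i ≤ ⋁_{j∈J} λ_j if and only if I ⊆ J, then Λ is a free distributive lattice on the generators λ_0, …, λ_N. -/
/-- An element `c` of a lattice is meet irreducible if `c = a ⊓ b` implies `c = a` or
`c = b`, and some element is not below `c` (i.e. `c` is not the top element). -/
def MeetIrred {L : Type*} [Lattice L] (c : L) : Prop :=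
  (∀ a b : L, c = a ⊓ b → c = a ∨ c = b) ∧ ∃ l : L, ¬ l ≤ c

set_option maxHeartbeats 1000000 in
/-- A finitely generated distributive lattice whose joins of generators (over non-empty
proper index sets) are meet irreducible and ordered by inclusion of the index sets is a
free distributive lattice on those generators, i.e. it satisfies the universal property
that any assignment of the generators into a distributive lattice extends to a unique
lattice homomorphism. -/
theorem stmt_6 {L : Type*} [DistribLattice L] {N : ℕ} (l : Fin (N + 1) → L)
    (hgen : latticeClosure (Set.range l) = Set.univ)
    (hirr : ∀ (I : Finset (Fin (N + 1))) (hI : I.Nonempty), I ≠ Finset.univ →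
      MeetIrred (I.sup' hI l))
    (horder : ∀ (I J : Finset (Fin (N + 1))) (hI : I.Nonempty) (hJ : J.Nonempty),
      I ≠ Finset.univ → J ≠ Finset.univ → (I.sup' hI l ≤ J.sup' hJ l ↔ I ⊆ J)) :
    ∀ (K : Type*) [DistribLattice K] (f : Fin (N + 1) → K),
      ∃! g : LatticeHom L K, ∀ i, g (l i) = f i := by
  intro K instK f
  classical
  set ι := {I : Finset (Fin (N + 1)) // I.Nonempty} with hι
  let xI : ι → L := fun I => I.1.sup' I.2 l
  let yI : ι → K := fun I => I.1.sup' I.2 f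
  have huniv : (Finset.univ : Finset (Fin (N + 1))).Nonempty := ⟨0, Finset.mem_univ 0⟩
  -- every element is below the join of all generators
  have htop : ∀ a : L, a ≤ xI ⟨Finset.univ, huniv⟩ := by
    intro a
    have hsub : Set.range l ⊆ {a : L | a ≤ xI ⟨Finset.univ, huniv⟩} := by
      rintro _ ⟨i, rfl⟩
      exact Finset.le_sup' l (Finset.mem_univ i)
    have hlat : IsSublattice {a : L | a ≤ xI ⟨Finset.univ, huniv⟩} := by
      constructor
      · intro u hu v hv; exact sup_le hu hv
      · intro u hu v hv; exact le_trans inf_le_left hu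
    have := latticeClosure_min hsub hlat
    rw [hgen] at this
    exact this (Set.mem_univ a)
  -- the set of "upper covers by joins of generators"
  let S : L → Finset ι := fun a => Finset.univ.filter (fun I => a ≤ xI I)
  have hmemS : ∀ (a : L) (I : ι), I ∈ S a ↔ a ≤ xI I := by
    intro a I
    simp [S]
  have hSuniv : ∀ a : L, (⟨Finset.univ, huniv⟩ : ι) ∈ S a := fun a =>
    (hmemS a _).2 (htop a)
  have hSne : ∀ a : L, (S a).Nonempty := fun a => ⟨_, hSuniv a⟩
  let G : L → K := fun a => (S a).inf' (hSne a) yI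
  -- key: characterization of l i ≤ xI I
  have lmem : ∀ (i : Fin (N + 1)) (I : ι), l i ≤ xI I ↔ i ∈ I.1 := by
    intro i I
    constructor
    · intro h
      by_contra hi
      have hIne : I.1 ≠ Finset.univ := by
        intro hI; exact hi (hI ▸ Finset.mem_univ i)
      have hsing : ({i} : Finset (Fin (N + 1))) ≠ Finset.univ := by
        intro hsi
        obtain ⟨j, hj⟩ := I.2
        have : j ∈ ({i} : Finset (Fin (N + 1))) := hsi ▸ Finset.mem_univ j
        rw [Finset.mem_singleton] at this
        exact hi (this ▸ hj)
      have := (horder {i} I.1 ⟨i, Finset.mem_singleton_self i⟩ I.2 hsing hIne).1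
      rw [Finset.sup'_singleton] at this
      have := this h
      exact hi (Finset.singleton_subset_iff.1 this)
    · intro h
      exact Finset.le_sup' l h
  -- meet irreducibility gives meet primeness
  have hprime : ∀ (I : ι), I.1 ≠ Finset.univ → ∀ a b : L, a ⊓ b ≤ xI I →
      a ≤ xI I ∨ b ≤ xI I := by
    intro I hIne a b hab
    have hc : xI I = (xI I ⊔ a) ⊓ (xI I ⊔ b) := by
      rw [← sup_inf_left, sup_eq_left.2 hab]
    rcases (hirr I.1 I.2 hIne).1 _ _ hc with h | h
    · exact Or.inl (sup_eq_left.1 h.symm)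
    · exact Or.inr (sup_eq_left.1 h.symm)
  -- G is monotone
  have Gmono : ∀ a b : L, a ≤ b → G a ≤ G b := by
    intro a b hab
    apply Finset.le_inf'
    intro I hI
    exact Finset.inf'_le _ ((hmemS a I).2 (le_trans hab ((hmemS b I).1 hI)))
  -- G maps generators correctly
  have Gmap : ∀ i, G (l i) = f i := by
    intro i
    apply le_antisymm
    · have hmem : (⟨{i}, ⟨i, Finset.mem_singleton_self i⟩⟩ : ι) ∈ S (l i) :=
        (hmemS _ _).2 ((lmem i _).2 (Finset.mem_singleton_self i))
      have := Finset.inf'_le yI hmem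
      simpa [yI] using this
    · apply Finset.le_inf'
      intro I hI
      exact Finset.le_sup' f ((lmem i I).1 ((hmemS _ I).1 hI))
  -- G preserves meets
  have Ginf : ∀ a b : L, G (a ⊓ b) = G a ⊓ G b := by
    intro a b
    apply le_antisymm
    · apply le_inf (Gmono _ _ inf_le_left) (Gmono _ _ inf_le_right)
    · apply Finset.le_inf'
      intro I hI
      have hab : a ⊓ b ≤ xI I := (hmemS _ I).1 hI
      by_cases hIu : I.1 = Finset.univ
      · have : I = ⟨Finset.univ, huniv⟩ := Subtype.ext hIu
        rw [this]
        exact le_trans inf_le_left (Finset.inf'_le yI (hSuniv a))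
      · rcases hprime I hIu a b hab with h | h
        · exact le_trans inf_le_left (Finset.inf'_le yI ((hmemS a I).2 h))
        · exact le_trans inf_le_right (Finset.inf'_le yI ((hmemS b I).2 h))
  -- G preserves joins
  have Gsup : ∀ a b : L, G (a ⊔ b) = G a ⊔ G b := by
    intro a b
    apply le_antisymm
    · show G (a ⊔ b) ≤ (S a).inf' (hSne a) yI ⊔ (S b).inf' (hSne b) yI
      rw [Finset.inf'_sup_inf']
      apply Finset.le_inf'
      intro p hp
      rw [Finset.mem_product] at hp
      have hpa : a ≤ xI p.1 := (hmemS a p.1).1 hp.1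
      have hpb : b ≤ xI p.2 := (hmemS b p.2).1 hp.2
      have hUne : (p.1.1 ∪ p.2.1).Nonempty := p.1.2.mono Finset.subset_union_left
      have hxU : a ⊔ b ≤ xI ⟨p.1.1 ∪ p.2.1, hUne⟩ := by
        apply sup_le
        · exact le_trans hpa (Finset.sup'_mono l Finset.subset_union_left p.1.2)
        · exact le_trans hpb (Finset.sup'_mono l Finset.subset_union_right p.2.2)
      have hle := Finset.inf'_le yI ((hmemS (a ⊔ b) _).2 hxU)
      have hyU : yI ⟨p.1.1 ∪ p.2.1, hUne⟩ = yI p.1 ⊔ yI p.2 :=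
        Finset.sup'_union p.1.2 p.2.2 f
      rw [hyU] at hle
      exact hle
    · exact sup_le (Gmono _ _ le_sup_left) (Gmono _ _ le_sup_right)
  refine ⟨{ toFun := G, map_sup' := Gsup, map_inf' := Ginf }, Gmap, ?_⟩
  intro g' hg'
  apply DFunLike.ext
  intro a
  have hsub : Set.range l ⊆ {a : L | g' a = G a} := by
    rintro _ ⟨i, rfl⟩
    simp [hg' i, Gmap i]
  have hlat : IsSublattice {a : L | g' a = G a} := by
    constructor
    · intro u hu v hv
      simp only [Set.mem_setOf_eq] at *
      rw [map_sup, hu, hv, Gsup]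
    · intro u hu v hv
      simp only [Set.mem_setOf_eq] at *
      rw [map_inf, hu, hv, Ginf]
  have := latticeClosure_min hsub hlat
  rw [hgen] at this
  exact this (Set.mem_univ a)
end

section
/- The free distributive lattice on N+1 generators (without top and bottom) is isomorphic to the lattice of non-empty upper sets of the poset of non-empty subsets of {0,…,N} ordered by inclusion, with join given by intersection and meet given by union (of families of subsets regarded appropriately). -/
namespace Stmt8

variable {N : ℕ} {K : Type*} [DistribLattice K]

abbrev ι (N : ℕ) := {I : Finset (Fin (N + 1)) // I.Nonempty}

abbrev τ (N : ℕ) := {U : Set (ι N) // IsUpperSet U ∧ U.Nonempty}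

noncomputable def G (U : Set (ι N)) : Finset (ι N) := (Set.toFinite U).toFinset

lemma mem_G {U : Set (ι N)} {I : ι N} : I ∈ G U ↔ I ∈ U := Set.Finite.mem_toFinset _

lemma G_ne {U : Set (ι N)} (h : U.Nonempty) : (G U).Nonempty := by
  rwa [G, Set.Finite.toFinset_nonempty]

/-- The principal upper set of `I`. -/
def P (I : ι N) : τ N :=
  ⟨Set.Ici I, isUpperSet_Ici I, ⟨I, le_refl I⟩⟩

/-- The canonical map. -/
noncomputable def gd (f : Fin (N + 1) → K) (U : τ N) : K :=
  (G U.1).inf' (G_ne U.2.2) fun I => I.1.sup' I.2 f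

variable (f : Fin (N + 1) → K)

lemma gd_inter (U V W : τ N) (h : W.1 = U.1 ∩ V.1) : gd f W = gd f U ⊔ gd f V := by
  apply le_antisymm
  · rw [gd, gd, gd, Finset.inf'_sup_inf']
    apply Finset.le_inf'
    rintro ⟨I, J⟩ hIJ
    simp only [Finset.mem_product, mem_G] at hIJ
    have hIJle : I ≤ ⟨I.1 ∪ J.1, I.2.mono Finset.subset_union_left⟩ :=
      Finset.subset_union_left
    have hJle : J ≤ ⟨I.1 ∪ J.1, I.2.mono Finset.subset_union_left⟩ :=
      Finset.subset_union_right
    have hmem : (⟨I.1 ∪ J.1, I.2.mono Finset.subset_union_left⟩ : ι N) ∈ W.1 := by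
      rw [h]; exact ⟨U.2.1 hIJle hIJ.1, V.2.1 hJle hIJ.2⟩
    calc (G W.1).inf' (G_ne W.2.2) (fun I => I.1.sup' I.2 f)
        ≤ (I.1 ∪ J.1).sup' (I.2.mono Finset.subset_union_left) f :=
          Finset.inf'_le _ (mem_G.2 hmem)
      _ = I.1.sup' I.2 f ⊔ J.1.sup' J.2 f := Finset.sup'_union I.2 J.2 f
  · apply Finset.le_inf'
    intro I hI
    rw [mem_G, h] at hI
    exact sup_le (Finset.inf'_le _ (mem_G.2 hI.1)) (Finset.inf'_le _ (mem_G.2 hI.2))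

lemma gd_union (U V W : τ N) (h : W.1 = U.1 ∪ V.1) : gd f W = gd f U ⊓ gd f V := by
  have hG : G W.1 = G U.1 ∪ G V.1 := by
    ext I; simp [mem_G, h]
  rw [gd, gd, gd, Finset.inf'_congr (G_ne W.2.2) hG (fun _ _ => rfl),
    Finset.inf'_union (G_ne U.2.2) (G_ne V.2.2)]

lemma gd_gen (i : Fin (N + 1)) (W : τ N)
    (h : W.1 = {a | (⟨{i}, Finset.singleton_nonempty i⟩ : ι N) ≤ a}) : gd f W = f i := by
  rw [gd]
  apply le_antisymm
  · have hmem : (⟨{i}, Finset.singleton_nonempty i⟩ : ι N) ∈ W.1 := by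
      rw [h]; exact le_refl (⟨{i}, Finset.singleton_nonempty i⟩ : ι N)
    calc (G W.1).inf' (G_ne W.2.2) (fun I => I.1.sup' I.2 f) ≤ ({i} : Finset (Fin (N+1))).sup' (Finset.singleton_nonempty i) f :=
          Finset.inf'_le _ (mem_G.2 hmem)
      _ = f i := by simp
  · apply Finset.le_inf'
    intro I hI
    rw [mem_G, h] at hI
    have : i ∈ I.1 := Finset.singleton_subset_iff.mp hI
    exact Finset.le_sup' f this

section Unique

variable (g : τ N → K)
  (hinter : ∀ U V W : τ N, W.1 = U.1 ∩ V.1 → g W = g U ⊔ g V)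
  (hunion : ∀ U V W : τ N, W.1 = U.1 ∪ V.1 → g W = g U ⊓ g V)
  (hgen : ∀ (i : Fin (N + 1)) (W : τ N),
    W.1 = {a | (⟨{i}, Finset.singleton_nonempty i⟩ : ι N) ≤ a} → g W = f i)

include hinter hgen in
lemma g_P : ∀ (s : Finset (Fin (N + 1))) (hs : s.Nonempty),
    g (P ⟨s, hs⟩) = s.sup' hs f := by
  intro s hs
  induction hs using Finset.Nonempty.cons_induction with
  | singleton i =>
    rw [Finset.sup'_singleton]
    exact hgen i _ rfl
  | cons i s hi hs ih =>
    have key : (P (⟨Finset.cons i s hi, Finset.cons_nonempty hi⟩ : ι N)).1 =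
        (P ⟨{i}, Finset.singleton_nonempty i⟩).1 ∩ (P ⟨s, hs⟩).1 := by
      ext a
      simp only [P, Set.mem_Ici, Set.mem_inter_iff, ← Subtype.coe_le_coe,
        Finset.le_iff_subset, Finset.cons_subset, Finset.singleton_subset_iff]
    rw [hinter _ _ _ key, hgen i _ rfl, ih, Finset.sup'_cons]

include hinter hunion hgen in
lemma g_eq_gd : ∀ W : τ N, g W = gd f W := by
  have main : ∀ (S : Finset (ι N)) (hS : S.Nonempty) (W : τ N),
      W.1 = ⋃ I ∈ S, Set.Ici I → g W = S.inf' hS fun I => I.1.sup' I.2 f := by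
    intro S hS
    induction hS using Finset.Nonempty.cons_induction with
    | singleton I =>
      intro W hW
      have : W = P I := Subtype.ext (by simpa [P] using hW)
      rw [this, Finset.inf'_singleton]
      exact g_P f g hinter hgen I.1 I.2
    | cons I S hI hS ih =>
      intro W hW
      set W' : τ N := ⟨⋃ J ∈ S, Set.Ici J,
        isUpperSet_iUnion₂ fun J _ => isUpperSet_Ici J,
        ⟨hS.choose, Set.mem_biUnion hS.choose_spec (Set.mem_Ici.mpr le_rfl)⟩⟩ with hW'
      have hdec : W.1 = (P I).1 ∪ W'.1 := by
        rw [hW]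
        simp [Finset.cons_eq_insert, Set.biUnion_insert, P]
        rfl
      rw [hunion _ _ _ hdec, g_P f g hinter hgen I.1 I.2, ih W' rfl,
        Finset.inf'_cons]
  intro W
  have hW : W.1 = ⋃ I ∈ G W.1, Set.Ici I := by
    ext a
    simp only [Set.mem_iUnion, Set.mem_Ici, mem_G]
    exact ⟨fun h => ⟨a, h, le_refl a⟩, fun ⟨I, hI, hIa⟩ => W.2.1 hIa hI⟩
  rw [main (G W.1) (G_ne W.2.2) W hW, gd]

end Unique

end Stmt8

/-- The free distributive lattice on `N + 1` generators (without top and bottom) is the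
lattice of non-empty upper sets of the poset of non-empty subsets of `{0, …, N}` ordered
by inclusion, with join given by intersection and meet given by union: this lattice,
with generators the principal upper sets of the singletons, satisfies the universal
property of the free distributive lattice. -/
theorem stmt_8 (N : ℕ) (K : Type*) [DistribLattice K] (f : Fin (N + 1) → K) :
    ∃! g : {U : Set {I : Finset (Fin (N + 1)) // I.Nonempty} //
        IsUpperSet U ∧ U.Nonempty} → K,
      (∀ U V W, W.1 = U.1 ∩ V.1 → g W = g U ⊔ g V) ∧
      (∀ U V W, W.1 = U.1 ∪ V.1 → g W = g U ⊓ g V) ∧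
      (∀ (i : Fin (N + 1)) W,
        W.1 = {a | (⟨{i}, Finset.singleton_nonempty i⟩ :
          {I : Finset (Fin (N + 1)) // I.Nonempty}) ≤ a} → g W = f i) := by
  refine ⟨Stmt8.gd f, ⟨Stmt8.gd_inter f, Stmt8.gd_union f, Stmt8.gd_gen f⟩, ?_⟩
  rintro g ⟨h1, h2, h3⟩
  funext W
  exact Stmt8.g_eq_gd f g h1 h2 h3 W
end

section
/- The distributive lattice of subsets of ℂP^N generated under union and intersection by the sets V_i := {[x] | |x_i| = max_j |x_j|}, i ∈ {0,…,N}, is a free distributive lattice on these N+1 generators. -/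
open scoped LinearAlgebra.Projectivization

/-- The subset `Vᵢ` of `ℂP^N` of points whose `i`-th homogeneous coordinate has maximal
modulus. -/
def V (N : ℕ) (i : Fin (N + 1)) : Set (ℙ ℂ (Fin (N + 1) → ℂ)) :=
  {p | ‖p.rep i‖ =
    Finset.univ.sup' Finset.univ_nonempty fun j => ‖p.rep j‖}

namespace Stmt11

open Finset

abbrev Pt (N : ℕ) := ℙ ℂ (Fin (N + 1) → ℂ)

open Classical in
noncomputable def pat (N : ℕ) (p : Pt N) : Finset (Fin (N + 1)) :=
  Finset.univ.filter fun i => p ∈ V N i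

lemma mem_pat {N : ℕ} {p : Pt N} {i : Fin (N + 1)} : i ∈ pat N p ↔ p ∈ V N i := by
  simp [pat]

lemma pat_nonempty (N : ℕ) (p : Pt N) : (pat N p).Nonempty := by
  obtain ⟨j, -, hj⟩ := Finset.exists_mem_eq_sup' (Finset.univ_nonempty)
    (fun j => ‖p.rep j‖)
  exact ⟨j, mem_pat.2 hj.symm⟩

lemma sup'_mul {ι : Type*} (s : Finset ι) (hs : s.Nonempty) (c : ℝ) (hc : 0 ≤ c)
    (g : ι → ℝ) : s.sup' hs (fun i => c * g i) = c * s.sup' hs g := by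
  apply le_antisymm
  · exact Finset.sup'_le _ _ fun i hi => mul_le_mul_of_nonneg_left (Finset.le_sup' g hi) hc
  · obtain ⟨j, hj, hj'⟩ := Finset.exists_mem_eq_sup' hs g
    rw [hj']
    exact Finset.le_sup' (fun i => c * g i) hj

lemma mem_V_mk {N : ℕ} (x : Fin (N + 1) → ℂ) (hx : x ≠ 0) (i : Fin (N + 1)) :
    Projectivization.mk ℂ x hx ∈ V N i ↔
      ‖x i‖ = Finset.univ.sup' Finset.univ_nonempty fun j => ‖x j‖ := by
  obtain ⟨a, ha⟩ := Projectivization.exists_smul_eq_mk_rep ℂ x hx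
  have hrep : ∀ j, ‖(Projectivization.mk ℂ x hx).rep j‖
      = ‖(a : ℂ)‖ * ‖x j‖ := by
    intro j
    rw [← ha]
    simp [Pi.smul_apply, Units.smul_def, map_mul]
  have hsup : (Finset.univ.sup' Finset.univ_nonempty fun j =>
      ‖(Projectivization.mk ℂ x hx).rep j‖)
      = ‖(a : ℂ)‖ * Finset.univ.sup' Finset.univ_nonempty fun j =>
        ‖x j‖ := by
    rw [← sup'_mul _ _ _ (by positivity)]
    exact Finset.sup'_congr _ rfl fun j _ => hrep j
  have ha0 : ‖(a : ℂ)‖ ≠ 0 := by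
    simp only [ne_eq, norm_eq_zero]; exact a.ne_zero
  constructor
  · intro h
    have h' := h
    simp only [V, Set.mem_setOf_eq] at h'
    rw [hrep, hsup] at h'
    exact mul_left_cancel₀ ha0 h'
  · intro h
    show ‖(Projectivization.mk ℂ x hx).rep i‖ = _
    rw [hrep, hsup, h]

lemma cls_nonempty {N : ℕ} (S : Finset (Fin (N + 1))) (hS : S.Nonempty) :
    ∃ p : Pt N, pat N p = S := by
  classical
  set x : Fin (N + 1) → ℂ := fun i => if i ∈ S then 1 else 1 / 2 with hxdef
  obtain ⟨i0, hi0⟩ := hS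
  have hx : x ≠ 0 := by
    intro h
    have := congrFun h i0
    simp [hxdef, hi0] at this
  refine ⟨Projectivization.mk ℂ x hx, ?_⟩
  have habs : ∀ j, ‖x j‖ = if j ∈ S then 1 else 1 / 2 := by
    intro j
    by_cases hj : j ∈ S <;> simp [hxdef, hj]
  have hsup : (Finset.univ.sup' Finset.univ_nonempty fun j => ‖x j‖) = 1 := by
    apply le_antisymm
    · apply Finset.sup'_le
      intro j _
      rw [habs]
      split <;> norm_num
    · have := Finset.le_sup' (b := i0) (fun j => ‖x j‖) (Finset.mem_univ i0)
      rwa [habs, if_pos hi0] at this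
  ext i
  rw [mem_pat, mem_V_mk, hsup, habs]
  split <;> simp_all

/-- The key invariance property preserved by the lattice operations. -/
def Good (N : ℕ) (A : Set (Pt N)) : Prop :=
  A.Nonempty ∧ ∀ p q : Pt N, pat N p ⊆ pat N q → p ∈ A → q ∈ A

lemma good_V (N : ℕ) (i : Fin (N + 1)) : Good N (V N i) := by
  constructor
  · obtain ⟨p, hp⟩ := cls_nonempty {i} (Finset.singleton_nonempty i)
    exact ⟨p, mem_pat.1 (by rw [hp]; exact Finset.mem_singleton_self i)⟩
  · intro p q hpq hp
    exact mem_pat.1 (hpq (mem_pat.2 hp))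

lemma good_union {N : ℕ} {A B : Set (Pt N)} (hA : Good N A) (hB : Good N B) :
    Good N (A ∪ B) := by
  refine ⟨hA.1.mono Set.subset_union_left, ?_⟩
  rintro p q hpq (hp | hp)
  · exact Or.inl (hA.2 p q hpq hp)
  · exact Or.inr (hB.2 p q hpq hp)

lemma good_inter {N : ℕ} {A B : Set (Pt N)} (hA : Good N A) (hB : Good N B) :
    Good N (A ∩ B) := by
  constructor
  · obtain ⟨pT, hpT⟩ := cls_nonempty (Finset.univ : Finset (Fin (N + 1))) Finset.univ_nonempty
    obtain ⟨a, ha⟩ := hA.1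
    obtain ⟨b, hb⟩ := hB.1
    exact ⟨pT, hA.2 a pT (by rw [hpT]; exact Finset.subset_univ _) ha,
      hB.2 b pT (by rw [hpT]; exact Finset.subset_univ _) hb⟩
  · intro p q hpq hp
    exact ⟨hA.2 p q hpq hp.1, hB.2 p q hpq hp.2⟩

lemma good_of_mem {N : ℕ} {A : Set (Pt N)} (hA : A ∈ latticeClosure (Set.range (V N))) :
    Good N A := by
  have : latticeClosure (Set.range (V N)) ⊆ {A | Good N A} := by
    apply latticeClosure_min
    · rintro _ ⟨i, rfl⟩
      exact good_V N i
    · exact ⟨fun a ha b hb => good_union ha hb, fun a ha b hb => good_inter ha hb⟩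
  exact this hA

open Classical in
noncomputable def M (N : ℕ) (A : Set (Pt N)) : Finset (Finset (Fin (N + 1))) :=
  Finset.univ.filter fun S => S.Nonempty ∧ ∀ p : Pt N, pat N p = S → p ∈ A

lemma mem_M {N : ℕ} {A : Set (Pt N)} {S : Finset (Fin (N + 1))} :
    S ∈ M N A ↔ S.Nonempty ∧ ∀ p : Pt N, pat N p = S → p ∈ A := by
  simp [M]

lemma M_nonempty {N : ℕ} {A : Set (Pt N)} (hA : Good N A) : (M N A).Nonempty := by
  refine ⟨Finset.univ, mem_M.2 ⟨Finset.univ_nonempty, fun p hp => ?_⟩⟩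
  obtain ⟨q, hq⟩ := hA.1
  exact hA.2 q p (by rw [hp]; exact Finset.subset_univ _) hq

lemma M_upper {N : ℕ} {A : Set (Pt N)} (hA : Good N A) {S T : Finset (Fin (N + 1))}
    (hS : S ∈ M N A) (hST : S ⊆ T) (hT : T.Nonempty) : T ∈ M N A := by
  obtain ⟨p, hp⟩ := cls_nonempty S (mem_M.1 hS).1
  refine mem_M.2 ⟨hT, fun q hq => ?_⟩
  exact hA.2 p q (by rw [hp, hq]; exact hST) ((mem_M.1 hS).2 p hp)

variable {K : Type*} [DistribLattice K]

noncomputable def mt (f : Fin 1 → K) : K := f 0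

noncomputable def trm {N : ℕ} (f : Fin (N + 1) → K) (S : Finset (Fin (N + 1))) : K :=
  if h : S.Nonempty then S.inf' h f else f 0

lemma trm_union {N : ℕ} (f : Fin (N + 1) → K) {S T : Finset (Fin (N + 1))}
    (hS : S.Nonempty) (hT : T.Nonempty) : trm f (S ∪ T) = trm f S ⊓ trm f T := by
  classical
  rw [trm, trm, trm, dif_pos hS, dif_pos hT, dif_pos (hS.mono Finset.subset_union_left)]
  exact Finset.inf'_union hS hT f

noncomputable def G {N : ℕ} (f : Fin (N + 1) → K) (A : Set (Pt N)) (hA : Good N A) : K :=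
  (M N A).sup' (M_nonempty hA) (trm f)

lemma M_union {N : ℕ} {A B : Set (Pt N)} (hA : Good N A) (hB : Good N B) :
    M N (A ∪ B) = M N A ∪ M N B := by
  classical
  ext S
  simp only [mem_M, Finset.mem_union]
  constructor
  · rintro ⟨hSne, hcls⟩
    obtain ⟨p, hp⟩ := cls_nonempty S hSne
    rcases hcls p hp with hpA | hpB
    · exact Or.inl ⟨hSne, fun q hq => hA.2 p q (by rw [hp, hq]) hpA⟩
    · exact Or.inr ⟨hSne, fun q hq => hB.2 p q (by rw [hp, hq]) hpB⟩
  · rintro (⟨hSne, h⟩ | ⟨hSne, h⟩)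
    · exact ⟨hSne, fun p hp => Or.inl (h p hp)⟩
    · exact ⟨hSne, fun p hp => Or.inr (h p hp)⟩

lemma M_inter {N : ℕ} {A B : Set (Pt N)} :
    M N (A ∩ B) = M N A ∩ M N B := by
  classical
  ext S
  simp only [mem_M, Finset.mem_inter, Set.mem_inter_iff]
  constructor
  · rintro ⟨hne, h⟩
    exact ⟨⟨hne, fun p hp => (h p hp).1⟩, ⟨hne, fun p hp => (h p hp).2⟩⟩
  · rintro ⟨⟨hne, h1⟩, ⟨-, h2⟩⟩
    exact ⟨hne, fun p hp => ⟨h1 p hp, h2 p hp⟩⟩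

lemma G_union {N : ℕ} (f : Fin (N + 1) → K) {A B : Set (Pt N)} (hA : Good N A)
    (hB : Good N B) : G f (A ∪ B) (good_union hA hB) = G f A hA ⊔ G f B hB := by
  classical
  rw [G, G, G, Finset.sup'_congr (M_nonempty (good_union hA hB)) (M_union hA hB)
    (fun _ _ => rfl)]
  exact Finset.sup'_union (M_nonempty hA) (M_nonempty hB) (trm f)

lemma G_inter {N : ℕ} (f : Fin (N + 1) → K) {A B : Set (Pt N)} (hA : Good N A)
    (hB : Good N B) : G f (A ∩ B) (good_inter hA hB) = G f A hA ⊓ G f B hB := by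
  classical
  apply le_antisymm
  · apply Finset.sup'_le
    intro S hS
    rw [M_inter, Finset.mem_inter] at hS
    exact le_inf (Finset.le_sup' (trm f) hS.1) (Finset.le_sup' (trm f) hS.2)
  · rw [G, G, Finset.sup'_inf_sup']
    apply Finset.sup'_le
    rintro ⟨S, T⟩ hST
    rw [Finset.mem_product] at hST
    have hSne := (mem_M.1 hST.1).1
    have hTne := (mem_M.1 hST.2).1
    have hmem : S ∪ T ∈ M N (A ∩ B) := by
      rw [M_inter, Finset.mem_inter]
      exact ⟨M_upper hA hST.1 Finset.subset_union_left (hSne.mono Finset.subset_union_left),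
        M_upper hB hST.2 Finset.subset_union_right (hSne.mono Finset.subset_union_left)⟩
    calc trm f S ⊓ trm f T = trm f (S ∪ T) := (trm_union f hSne hTne).symm
    _ ≤ _ := Finset.le_sup' (trm f) hmem

lemma G_V {N : ℕ} (f : Fin (N + 1) → K) (i : Fin (N + 1)) :
    G f (V N i) (good_V N i) = f i := by
  classical
  apply le_antisymm
  · apply Finset.sup'_le
    intro S hS
    obtain ⟨hSne, hcls⟩ := mem_M.1 hS
    obtain ⟨p, hp⟩ := cls_nonempty S hSne
    have hiS : i ∈ S := by
      rw [← hp]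
      exact mem_pat.2 (hcls p hp)
    rw [trm, dif_pos hSne]
    exact Finset.inf'_le f hiS
  · have hmem : ({i} : Finset (Fin (N + 1))) ∈ M N (V N i) := by
      refine mem_M.2 ⟨Finset.singleton_nonempty i, fun p hp => ?_⟩
      exact mem_pat.1 (by rw [hp]; exact Finset.mem_singleton_self i)
    have : trm f ({i} : Finset (Fin (N + 1))) = f i := by
      rw [trm, dif_pos (Finset.singleton_nonempty i)]
      simp
    calc f i = trm f ({i} : Finset (Fin (N + 1))) := this.symm
    _ ≤ _ := Finset.le_sup' (trm f) hmem

end Stmt11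

/-- The distributive lattice of subsets of `ℂP^N` generated under union and
intersection by the sets `V₀, …, V_N` is free on these `N + 1` generators: any
assignment of the generators into a distributive lattice extends uniquely to a map
preserving union (as join) and intersection (as meet). -/
theorem stmt_11 (N : ℕ) (K : Type*) [DistribLattice K] (f : Fin (N + 1) → K) :
    ∃! g : {A : Set (ℙ ℂ (Fin (N + 1) → ℂ)) //
        A ∈ latticeClosure (Set.range (V N))} → K,
      (∀ A B C, C.1 = A.1 ∪ B.1 → g C = g A ⊔ g B) ∧
      (∀ A B C, C.1 = A.1 ∩ B.1 → g C = g A ⊓ g B) ∧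
      (∀ (i : Fin (N + 1)) C, C.1 = V N i → g C = f i) := by
  classical
  refine ⟨fun A => Stmt11.G f A.1 (Stmt11.good_of_mem A.2), ⟨?_, ?_, ?_⟩, ?_⟩
  · rintro ⟨A, hA⟩ ⟨B, hB⟩ ⟨C, hC⟩ h
    simp only at h ⊢
    subst h
    exact Stmt11.G_union f (Stmt11.good_of_mem hA) (Stmt11.good_of_mem hB)
  · rintro ⟨A, hA⟩ ⟨B, hB⟩ ⟨C, hC⟩ h
    simp only at h ⊢
    subst h
    exact Stmt11.G_inter f (Stmt11.good_of_mem hA) (Stmt11.good_of_mem hB)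
  · rintro i ⟨C, hC⟩ h
    simp only at h ⊢
    subst h
    exact Stmt11.G_V f i
  · rintro g' ⟨h1, h2, h3⟩
    have key : latticeClosure (Set.range (V N)) ⊆
        {A | A ∈ latticeClosure (Set.range (V N)) ∧
          ∀ hA : A ∈ latticeClosure (Set.range (V N)),
          g' ⟨A, hA⟩ = Stmt11.G f A (Stmt11.good_of_mem hA)} := by
      apply latticeClosure_min
      · rintro _ ⟨i, rfl⟩
        refine ⟨subset_latticeClosure ⟨i, rfl⟩, fun hA => ?_⟩
        rw [h3 i ⟨V N i, hA⟩ rfl, Stmt11.G_V f i]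
      · constructor
        · rintro a ⟨haC, ha⟩ b ⟨hbC, hb⟩
          have habC : a ⊔ b ∈ latticeClosure (Set.range (V N)) :=
            isSublattice_latticeClosure.1 haC hbC
          refine ⟨habC, fun hab => ?_⟩
          rw [h1 ⟨a, haC⟩ ⟨b, hbC⟩ ⟨a ⊔ b, hab⟩ rfl, ha haC, hb hbC]
          exact (Stmt11.G_union f (Stmt11.good_of_mem haC) (Stmt11.good_of_mem hbC)).symm
        · rintro a ⟨haC, ha⟩ b ⟨hbC, hb⟩
          have habC : a ⊓ b ∈ latticeClosure (Set.range (V N)) :=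
            isSublattice_latticeClosure.2 haC hbC
          refine ⟨habC, fun hab => ?_⟩
          rw [h2 ⟨a, haC⟩ ⟨b, hbC⟩ ⟨a ⊓ b, hab⟩ rfl, ha haC, hb hbC]
          exact (Stmt11.G_inter f (Stmt11.good_of_mem haC) (Stmt11.good_of_mem hbC)).symm
    funext A
    obtain ⟨A, hA⟩ := A
    exact (key hA).2 hA
end

section
/- For 0 ≤ i < j ≤ N, the map ψ_i : V_i → D^N sending [x_0:…:x_N] to (x_0/x_i, …, x_{i-1}/x_i, x_{i+1}/x_i, …, x_N/x_i) is a homeomorphism onto the N-fold Cartesian product of the closed unit disc, with inverse (d_1,…,d_N) ↦ [d_1:…:d_i:1:d_{i+1}:…:d_N]. -/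
open scoped LinearAlgebra.Projectivization
open Topology

/-- The quotient topology on the projectivization of a topological vector space. -/
instance Projectivization.instTopologicalSpace (K V : Type*) [DivisionRing K]
    [AddCommGroup V] [Module K V] [TopologicalSpace V] :
    TopologicalSpace (ℙ K V) :=
  instTopologicalSpaceQuotient (s := projectivizationSetoid K V)

/-- The closed unit disc in `ℂ`. -/
def D : Set ℂ := {z | ‖z‖ ≤ 1}

namespace Stmt13Aux

open Projectivization

/-- Scalar multiplication by a unit, as a homeomorphism of the nonzero vectors. -/
def smulHomeo (N : ℕ) (c : ℂˣ) :
    {v : Fin (N + 1) → ℂ // v ≠ 0} ≃ₜ {v : Fin (N + 1) → ℂ // v ≠ 0} where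
  toFun v := ⟨(c : ℂ) • v.1, smul_ne_zero c.ne_zero v.2⟩
  invFun v := ⟨((c⁻¹ : ℂˣ) : ℂ) • v.1, smul_ne_zero c⁻¹.ne_zero v.2⟩
  left_inv v := by ext1; simp [smul_smul]
  right_inv v := by ext1; simp [smul_smul]
  continuous_toFun := by apply Continuous.subtype_mk; fun_prop
  continuous_invFun := by apply Continuous.subtype_mk; fun_prop

lemma q_isQuotientMap (N : ℕ) :
    IsQuotientMap (Projectivization.mk' ℂ :
      {v : Fin (N + 1) → ℂ // v ≠ 0} → ℙ ℂ (Fin (N + 1) → ℂ)) :=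
  isQuotientMap_quotient_mk'

lemma q_isOpenMap (N : ℕ) :
    IsOpenMap (Projectivization.mk' ℂ :
      {v : Fin (N + 1) → ℂ // v ≠ 0} → ℙ ℂ (Fin (N + 1) → ℂ)) := by
  intro U hU
  rw [← (q_isQuotientMap N).isOpen_preimage]
  have key : (Projectivization.mk' ℂ) ⁻¹' ((Projectivization.mk' ℂ) '' U) =
      ⋃ c : ℂˣ, (smulHomeo N c) '' U := by
    ext v
    simp only [Set.mem_preimage, Set.mem_image, Set.mem_iUnion]
    constructor
    · rintro ⟨u, hu, huv⟩
      rw [mk'_eq_mk, mk'_eq_mk, mk_eq_mk_iff] at huv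
      obtain ⟨c, hc⟩ := huv
      refine ⟨c⁻¹, u, hu, ?_⟩
      ext1
      simp only [smulHomeo, Homeomorph.homeomorph_mk_coe, Equiv.coe_fn_mk]
      rw [← hc, Units.smul_def, smul_smul]
      simp
    · rintro ⟨c, u, hu, rfl⟩
      refine ⟨u, hu, ?_⟩
      rw [mk'_eq_mk, mk'_eq_mk, mk_eq_mk_iff]
      exact ⟨c⁻¹, by
        simp only [smulHomeo, Homeomorph.homeomorph_mk_coe, Equiv.coe_fn_mk,
          Units.smul_def, smul_smul]
        simp⟩
  rw [key]
  exact isOpen_iUnion fun c => (smulHomeo N c).isOpenMap U hU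

lemma sup'_const_mul {N : ℕ} (a : ℝ) (ha : 0 ≤ a) (f : Fin (N + 1) → ℝ) :
    (Finset.univ.sup' Finset.univ_nonempty fun j => a * f j) =
      a * Finset.univ.sup' Finset.univ_nonempty f :=
  (Finset.comp_sup'_eq_sup'_comp _ (fun x => a * x)
    (fun x y => mul_max_of_nonneg x y ha)).symm

/-- Membership in `V N i` in terms of an arbitrary representative. -/
lemma mem_V_iff {N : ℕ} (i : Fin (N + 1)) (v : Fin (N + 1) → ℂ) (hv : v ≠ 0) :
    Projectivization.mk ℂ v hv ∈ V N i ↔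
      ‖v i‖ =
        Finset.univ.sup' Finset.univ_nonempty fun j => ‖v j‖ := by
  obtain ⟨c, hc⟩ := exists_smul_eq_mk_rep ℂ v hv
  have hrep : ∀ j, ‖(Projectivization.mk ℂ v hv).rep j‖ =
      ‖(c : ℂ)‖ * ‖v j‖ := by
    intro j
    rw [← hc]
    simp [Units.smul_def, map_mul]
  have habs : (0:ℝ) < ‖(c : ℂ)‖ := by
    simpa using norm_pos_iff.2 c.ne_zero
  constructor
  · intro h
    have h' : ‖(c : ℂ)‖ * ‖v i‖ =
        ‖(c : ℂ)‖ * Finset.univ.sup' Finset.univ_nonempty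
          fun j => ‖v j‖ := by
      rw [← hrep i, h, ← sup'_const_mul _ habs.le]
      congr 1
      ext j
      rw [hrep j]
    exact mul_left_cancel₀ habs.ne' h'
  · intro h
    show ‖(Projectivization.mk ℂ v hv).rep i‖ = _
    calc ‖(Projectivization.mk ℂ v hv).rep i‖
        = ‖(c : ℂ)‖ * ‖v i‖ := hrep i
      _ = ‖(c : ℂ)‖ * Finset.univ.sup' Finset.univ_nonempty
            (fun j => ‖v j‖) := by rw [h]
      _ = _ := by
            rw [← sup'_const_mul _ habs.le]
            congr 1
            ext j
            rw [hrep j]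

lemma vi_ne_zero {N : ℕ} {i : Fin (N + 1)} {v : Fin (N + 1) → ℂ} (hv : v ≠ 0)
    (h : ‖v i‖ =
      Finset.univ.sup' Finset.univ_nonempty fun j => ‖v j‖) :
    v i ≠ 0 := by
  obtain ⟨j, hj⟩ := Function.ne_iff.1 hv
  intro h0
  have hle : ‖v j‖ ≤ ‖v i‖ := by
    rw [h]
    exact Finset.le_sup' (fun j => ‖v j‖) (Finset.mem_univ j)
  rw [h0] at hle
  simp only [norm_zero] at hle
  exact hj (by simpa using le_antisymm hle (norm_nonneg _))

/-- The quotient of two coordinates only depends on the point of projective space. -/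
lemma ratio_eq {N : ℕ} {i : Fin (N + 1)} (v : Fin (N + 1) → ℂ) (hv : v ≠ 0) (k : Fin N) :
    (Projectivization.mk ℂ v hv).rep (i.succAbove k) /
      (Projectivization.mk ℂ v hv).rep i = v (i.succAbove k) / v i := by
  obtain ⟨c, hc⟩ := exists_smul_eq_mk_rep ℂ v hv
  rw [← hc]
  simp only [Units.smul_def, Pi.smul_apply, smul_eq_mul]
  exact mul_div_mul_left _ _ c.ne_zero

lemma abs_ratio_le_one {N : ℕ} {i : Fin (N + 1)} {v : Fin (N + 1) → ℂ} (hv : v ≠ 0)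
    (h : ‖v i‖ =
      Finset.univ.sup' Finset.univ_nonempty fun j => ‖v j‖)
    (j : Fin (N + 1)) : ‖v j / v i‖ ≤ 1 := by
  rw [norm_div]
  refine div_le_one_of_le₀ ?_ (norm_nonneg _)
  rw [h]
  exact Finset.le_sup' (fun j => ‖v j‖) (Finset.mem_univ j)

end Stmt13Aux

open Stmt13Aux Projectivization in
/-- The map `ψᵢ : Vᵢ → D^N`, `[x₀ : … : x_N] ↦ (x₀/xᵢ, …, x_{i-1}/xᵢ, x_{i+1}/xᵢ, …,
x_N/xᵢ)`, is a homeomorphism onto the `N`-fold product of the closed unit disc, with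
inverse `(d₁, …, d_N) ↦ [d₁ : … : dᵢ : 1 : d_{i+1} : … : d_N]`. -/
theorem stmt_13 (N : ℕ) (i : Fin (N + 1)) :
    ∃ e : V N i ≃ₜ (Fin N → D),
      (∀ (p : V N i) (k : Fin N),
        (e p k : ℂ) = p.1.rep (i.succAbove k) / p.1.rep i) ∧
      (∀ d : Fin N → D,
        (e.symm d : ℙ ℂ (Fin (N + 1) → ℂ)) =
          Projectivization.mk ℂ (i.insertNth 1 fun k => (d k : ℂ))
            (by intro h0; have := congrFun h0 i; simp at this)) := by
  classical
  -- the condition on `rep` holds for the coordinates of `rep` itself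
  have hrepmax : ∀ p : V N i, ‖p.1.rep i‖ =
      Finset.univ.sup' Finset.univ_nonempty fun j => ‖p.1.rep j‖ := fun p => p.2
  have hrepi : ∀ p : V N i, p.1.rep i ≠ 0 := fun p =>
    vi_ne_zero p.1.rep_nonzero (hrepmax p)
  -- nonvanishing of insertNth vectors
  have hw0 : ∀ d : Fin N → D, (i.insertNth (1:ℂ) fun k => (d k : ℂ)) ≠ (0 : Fin (N+1) → ℂ) := by
    intro d h0; have := congrFun h0 i; simp at this
  -- membership of the inserted vector in `V N i`
  have hwmem : ∀ d : Fin N → D,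
      Projectivization.mk ℂ (i.insertNth (1:ℂ) fun k => (d k : ℂ)) (hw0 d) ∈ V N i := by
    intro d
    rw [mem_V_iff]
    have hsup : (Finset.univ.sup' Finset.univ_nonempty fun j =>
        ‖i.insertNth (α := fun _ => ℂ) 1 (fun k => (d k : ℂ)) j‖) = 1 := by
      refine le_antisymm (Finset.sup'_le _ _ fun j _ => ?_) ?_
      · refine Fin.succAboveCases i ?_ ?_ j
        · simp
        · intro k
          simp only [Fin.insertNth_apply_succAbove]
          exact (d k).2
      · have := Finset.le_sup' (fun j =>
          ‖i.insertNth (α := fun _ => ℂ) 1 (fun k => (d k : ℂ)) j‖)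
          (Finset.mem_univ i)
        simp only [Fin.insertNth_apply_same, norm_one] at this; exact this
    rw [hsup]
    simp
  -- the forward map ψ
  set ψ : V N i → (Fin N → D) := fun p k =>
    ⟨p.1.rep (i.succAbove k) / p.1.rep i, by
      have := abs_ratio_le_one p.1.rep_nonzero (hrepmax p) (i.succAbove k)
      exact this⟩ with hψ
  -- the inverse map φ
  set φ : (Fin N → D) → V N i := fun d =>
    ⟨Projectivization.mk ℂ (i.insertNth (1:ℂ) fun k => (d k : ℂ)) (hw0 d), hwmem d⟩ with hφ
  -- left inverse
  have hleft : ∀ p, φ (ψ p) = p := by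
    intro p
    apply Subtype.ext
    have hvecs : (i.insertNth (1:ℂ) fun k => ((ψ p k : ℂ))) =
        (p.1.rep i)⁻¹ • p.1.rep := by
      funext j
      refine Fin.succAboveCases i ?_ ?_ j
      · simp only [Fin.insertNth_apply_same, Pi.smul_apply, smul_eq_mul]
        rw [inv_mul_cancel₀ (hrepi p)]
      · intro k
        simp only [Fin.insertNth_apply_succAbove, Pi.smul_apply, smul_eq_mul, hψ]
        rw [div_eq_inv_mul]
    show Projectivization.mk ℂ _ _ = p.1
    conv_rhs => rw [← p.1.mk_rep]
    rw [mk_eq_mk_iff']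
    exact ⟨(p.1.rep i)⁻¹, hvecs.symm⟩
  -- right inverse
  have hright : ∀ d, ψ (φ d) = d := by
    intro d
    funext k
    apply Subtype.ext
    show ((φ d).1.rep (i.succAbove k)) / ((φ d).1.rep i) = (d k : ℂ)
    rw [hφ]
    rw [ratio_eq (i := i) _ (hw0 d) k]
    simp
  -- continuity of φ
  have hcontφ : Continuous φ := by
    apply Continuous.subtype_mk
    have : Continuous fun d : Fin N → D =>
        (⟨i.insertNth (1:ℂ) fun k => (d k : ℂ), hw0 d⟩ :
          {v : Fin (N + 1) → ℂ // v ≠ 0}) := by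
      apply Continuous.subtype_mk
      exact Continuous.finInsertNth i continuous_const
        (continuous_pi fun k => (continuous_apply k).subtype_val)
    exact (q_isQuotientMap N).continuous.comp this
  -- continuity of ψ, via the restricted quotient map
  have hquot : IsQuotientMap ((V N i).restrictPreimage (Projectivization.mk' ℂ)) :=
    ((q_isOpenMap N).restrictPreimage _).isQuotientMap
      ((q_isQuotientMap N).continuous.restrictPreimage)
      ((V N i).restrictPreimage_surjective (q_isQuotientMap N).surjective)
  have hcontψ : Continuous ψ := by
    rw [hquot.continuous_iff]
    apply continuous_pi
    intro k
    apply Continuous.subtype_mk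
    have heq : (fun v : (Projectivization.mk' ℂ) ⁻¹' (V N i) =>
        ((ψ (((V N i).restrictPreimage (Projectivization.mk' ℂ)) v) k : ℂ))) =
        fun v => v.1.1 (i.succAbove k) / v.1.1 i := by
      funext v
      show ((Projectivization.mk' ℂ v.1).rep (i.succAbove k)) /
        ((Projectivization.mk' ℂ v.1).rep i) = _
      rw [mk'_eq_mk, ratio_eq (i := i) v.1.1 v.1.2 k]
    rw [heq]
    refine Continuous.div ?_ ?_ ?_
    · exact (continuous_apply _).comp (continuous_subtype_val.comp continuous_subtype_val)
    · exact (continuous_apply _).comp (continuous_subtype_val.comp continuous_subtype_val)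
    · intro v
      have hv : Projectivization.mk ℂ v.1.1 v.1.2 ∈ V N i := by
        rw [← mk'_eq_mk]; exact v.2
      rw [mem_V_iff] at hv
      exact vi_ne_zero v.1.2 hv
  refine ⟨⟨⟨ψ, φ, hleft, hright⟩, hcontψ, hcontφ⟩, fun p k => rfl, fun d => rfl⟩
end

section
/- In the lattice of ideals of a ring (with sum as join and intersection as meet), suppose ideals k_0, …, k_N satisfy: for all non-empty I, J ⊆ {0,…,N}, ⋂_{i∈I} k_i ⊇ ⋂_{j∈J} k_j iff I ⊆ J, and each ⋂_{i∈I} k_i for non-empty proper I ⊊ {0,…,N} is irreducible with respect to sums (i.e., ⋂_{i∈I} k_i = a + b with a, b in the sublattice generated by the k_j implies it equals a or b). Then the sublattice of ideals generated by k_0, …, k_N under + and ∩ is a free distributive lattice on N+1 generators. -/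
/-- In the lattice of ideals of a ring (sum as join, intersection as meet), if the
ideals `k₀, …, k_N` satisfy `⋂_{i ∈ I} kᵢ ⊇ ⋂_{j ∈ J} kⱼ ↔ I ⊆ J` for all non-empty
`I, J`, each `⋂_{i ∈ I} kᵢ` (for non-empty proper `I`) is irreducible with respect to
sums within the sublattice generated by the `kⱼ`, and this sublattice is distributive,
then the sublattice of ideals generated by `k₀, …, k_N` under `+` and `∩` is a free
distributive lattice on the `N + 1` generators: any assignment of the generators into
a distributive lattice extends uniquely to a map preserving sums (as joins) and
intersections (as meets). -/
theorem stmt_19 {R : Type*} [Ring R] {N : ℕ} (k : Fin (N + 1) → Ideal R)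
    (horder : ∀ (I J : Finset (Fin (N + 1))) (hI : I.Nonempty) (hJ : J.Nonempty),
      J.inf' hJ k ≤ I.inf' hI k ↔ I ⊆ J)
    (hirr : ∀ (I : Finset (Fin (N + 1))) (hI : I.Nonempty), I ≠ Finset.univ →
      ∀ a b : Ideal R, a ∈ latticeClosure (Set.range k) →
        b ∈ latticeClosure (Set.range k) →
        I.inf' hI k = a + b → I.inf' hI k = a ∨ I.inf' hI k = b)
    (hdistrib : ∀ a b c : Ideal R, a ∈ latticeClosure (Set.range k) →
      b ∈ latticeClosure (Set.range k) → c ∈ latticeClosure (Set.range k) →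
      a ⊓ (b ⊔ c) = a ⊓ b ⊔ a ⊓ c) :
    ∀ (K : Type*) [DistribLattice K] (f : Fin (N + 1) → K),
      ∃! g : {a : Ideal R // a ∈ latticeClosure (Set.range k)} → K,
        (∀ a b c, c.1 = a.1 + b.1 → g c = g a ⊔ g b) ∧
        (∀ a b c, c.1 = a.1 ⊓ b.1 → g c = g a ⊓ g b) ∧
        (∀ (i : Fin (N + 1)) c, c.1 = k i → g c = f i) := by
  classical
  intro K _ f
  set cl := latticeClosure (Set.range k) with hcl
  -- every element of the closure lies above the inf of all generators
  have huniv : (Finset.univ : Finset (Fin (N + 1))).Nonempty := Finset.univ_nonempty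
  have hbot : ∀ a ∈ cl, Finset.univ.inf' huniv k ≤ a := by
    intro a ha
    have hsub : cl ⊆ {a : Ideal R | Finset.univ.inf' huniv k ≤ a} := by
      refine latticeClosure_min (t := {a : Ideal R | Finset.univ.inf' huniv k ≤ a}) ?_ ?_
      · rintro _ ⟨i, rfl⟩
        exact Finset.inf'_le k (Finset.mem_univ i)
      · constructor
        · intro x hx y hy
          exact le_sup_of_le_left (show Finset.univ.inf' huniv k ≤ x from hx)
        · intro x hx y hy
          exact le_inf (show Finset.univ.inf' huniv k ≤ x from hx) (show Finset.univ.inf' huniv k ≤ y from hy)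
    exact hsub ha
  -- infs of generators lie in the closure
  have hinfmem : ∀ (S : Finset (Fin (N + 1))) (hS : S.Nonempty), S.inf' hS k ∈ cl := by
    intro S hS
    exact isSublattice_latticeClosure.2.finsetInf'_mem hS
      (fun i _ => subset_latticeClosure ⟨i, rfl⟩)
  -- the index finset
  set D : Ideal R → Finset (Finset (Fin (N + 1))) :=
    fun a => Finset.univ.filter (fun S => ∃ h : S.Nonempty, S.inf' h k ≤ a) with hDdef
  have hmemD : ∀ (S : Finset (Fin (N + 1))) a,
      S ∈ D a ↔ ∃ h : S.Nonempty, S.inf' h k ≤ a := by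
    intro S a; simp [hDdef]
  have hDne : ∀ a ∈ cl, (D a).Nonempty := by
    intro a ha
    exact ⟨Finset.univ, (hmemD _ _).2 ⟨huniv, hbot a ha⟩⟩
  set F : Finset (Fin (N + 1)) → K :=
    fun S => if h : S.Nonempty then S.inf' h f else f 0 with hFdef
  set g : {a : Ideal R // a ∈ cl} → K :=
    fun a => (D a.1).sup' (hDne a.1 a.2) F with hgdef
  have hgval : ∀ (a : Ideal R) (ha : a ∈ cl), g ⟨a, ha⟩ = (D a).sup' (hDne a ha) F := by
    intro a ha; rfl
  -- key: irreducibility gives primeness of the infs w.r.t. sup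
  have hprime : ∀ (S : Finset (Fin (N + 1))) (hS : S.Nonempty) (a b : Ideal R),
      a ∈ cl → b ∈ cl → S.inf' hS k ≤ a ⊔ b → S.inf' hS k ≤ a ∨ S.inf' hS k ≤ b := by
    intro S hS a b ha hb hle
    by_cases hSu : S = Finset.univ
    · left
      subst hSu
      exact hbot a ha
    · have heq : S.inf' hS k = (S.inf' hS k ⊓ a) + (S.inf' hS k ⊓ b) := by
        rw [Submodule.add_eq_sup, ← hdistrib _ _ _ (hinfmem S hS) ha hb]
        exact (inf_eq_left.2 hle).symm
      have hmem := isSublattice_latticeClosure (s := Set.range k)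
      rcases hirr S hS hSu _ _ (hmem.2 (hinfmem S hS) ha) (hmem.2 (hinfmem S hS) hb) heq with
        h | h
      · left; rw [h]; exact inf_le_right
      · right; rw [h]; exact inf_le_right
  -- g preserves sums
  have hgsup : ∀ (a b : Ideal R) (ha : a ∈ cl) (hb : b ∈ cl) (hab : a ⊔ b ∈ cl),
      g ⟨a ⊔ b, hab⟩ = g ⟨a, ha⟩ ⊔ g ⟨b, hb⟩ := by
    intro a b ha hb hab
    rw [hgval, hgval, hgval]
    apply le_antisymm
    · apply Finset.sup'_le
      intro S hSmem
      obtain ⟨hS, hle⟩ := (hmemD _ _).1 hSmem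
      rcases hprime S hS a b ha hb hle with h | h
      · exact le_sup_of_le_left (Finset.le_sup' F ((hmemD _ _).2 ⟨hS, h⟩))
      · exact le_sup_of_le_right (Finset.le_sup' F ((hmemD _ _).2 ⟨hS, h⟩))
    · apply sup_le
      · apply Finset.sup'_le
        intro S hSmem
        obtain ⟨hS, hle⟩ := (hmemD _ _).1 hSmem
        exact Finset.le_sup' F ((hmemD _ _).2 ⟨hS, hle.trans le_sup_left⟩)
      · apply Finset.sup'_le
        intro S hSmem
        obtain ⟨hS, hle⟩ := (hmemD _ _).1 hSmem
        exact Finset.le_sup' F ((hmemD _ _).2 ⟨hS, hle.trans le_sup_right⟩)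
  -- g preserves intersections
  have hginf : ∀ (a b : Ideal R) (ha : a ∈ cl) (hb : b ∈ cl) (hab : a ⊓ b ∈ cl),
      g ⟨a ⊓ b, hab⟩ = g ⟨a, ha⟩ ⊓ g ⟨b, hb⟩ := by
    intro a b ha hb hab
    rw [hgval, hgval, hgval]
    apply le_antisymm
    · apply Finset.sup'_le
      intro S hSmem
      obtain ⟨hS, hle⟩ := (hmemD _ _).1 hSmem
      exact le_inf (Finset.le_sup' F ((hmemD _ _).2 ⟨hS, hle.trans inf_le_left⟩))
        (Finset.le_sup' F ((hmemD _ _).2 ⟨hS, hle.trans inf_le_right⟩))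
    · rw [Finset.sup'_inf_sup']
      apply Finset.sup'_le
      rintro ⟨S, T⟩ hST
      rw [Finset.mem_product] at hST
      obtain ⟨hS, hleS⟩ := (hmemD _ _).1 hST.1
      obtain ⟨hT, hleT⟩ := (hmemD _ _).1 hST.2
      have hSTne : (S ∪ T).Nonempty := hS.mono Finset.subset_union_left
      have hFst : F S ⊓ F T = F (S ∪ T) := by
        simp only [hFdef, dif_pos hS, dif_pos hT, dif_pos hSTne]
        exact (Finset.inf'_union hS hT f).symm
      have hkst : (S ∪ T).inf' hSTne k ≤ a ⊓ b := by
        rw [Finset.inf'_union hS hT k]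
        exact inf_le_inf hleS hleT
      rw [hFst]
      exact Finset.le_sup' F ((hmemD _ _).2 ⟨hSTne, hkst⟩)
  -- g sends generators to f
  have hggen : ∀ (i : Fin (N + 1)) (hi : k i ∈ cl), g ⟨k i, hi⟩ = f i := by
    intro i hi
    rw [hgval]
    apply le_antisymm
    · apply Finset.sup'_le
      intro S hSmem
      obtain ⟨hS, hle⟩ := (hmemD _ _).1 hSmem
      have hi' : ({i} : Finset (Fin (N + 1))) ⊆ S := by
        have := (horder {i} S ⟨i, Finset.mem_singleton_self i⟩ hS).1
        simp only [Finset.inf'_singleton] at this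
        exact this hle
      have hiS : i ∈ S := hi' (Finset.mem_singleton_self i)
      simp only [hFdef, dif_pos hS]
      exact Finset.inf'_le f hiS
    · have h1 : ({i} : Finset (Fin (N + 1))) ∈ D (k i) := by
        refine (hmemD _ _).2 ⟨⟨i, Finset.mem_singleton_self i⟩, ?_⟩
        simp
      have := Finset.le_sup' F h1
      simpa [hFdef] using this
  have hkmem : ∀ i, k i ∈ cl := fun i => subset_latticeClosure ⟨i, rfl⟩
  refine ⟨g, ⟨?_, ?_, ?_⟩, ?_⟩
  · rintro ⟨a, ha⟩ ⟨b, hb⟩ ⟨c, hc⟩ hcab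
    simp only at hcab
    have hcab' : c = a ⊔ b := by rw [hcab, Submodule.add_eq_sup]
    subst hcab'
    exact hgsup a b ha hb hc
  · rintro ⟨a, ha⟩ ⟨b, hb⟩ ⟨c, hc⟩ hcab
    simp only at hcab
    subst hcab
    exact hginf a b ha hb hc
  · rintro i ⟨c, hc⟩ hceq
    simp only at hceq
    subst hceq
    exact hggen i hc
  · rintro g' ⟨h1, h2, h3⟩
    have hsl := isSublattice_latticeClosure (s := Set.range k)
    set T : Set (Ideal R) := {a | ∃ ha : a ∈ cl, g' ⟨a, ha⟩ = g ⟨a, ha⟩} with hTdef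
    have hTsub : cl ⊆ T := by
      refine latticeClosure_min (t := T) ?_ ?_
      · rintro _ ⟨i, rfl⟩
        exact ⟨hkmem i, by rw [h3 i ⟨k i, hkmem i⟩ rfl, hggen i (hkmem i)]⟩
      · constructor
        · rintro a ⟨ha, hga⟩ b ⟨hb, hgb⟩
          have hab : a ⊔ b ∈ cl := hsl.1 ha hb
          refine ⟨hab, ?_⟩
          have := h1 ⟨a, ha⟩ ⟨b, hb⟩ ⟨a ⊔ b, hab⟩ (Submodule.add_eq_sup ..).symm
          rw [this, hga, hgb, hgsup a b ha hb hab]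
        · rintro a ⟨ha, hga⟩ b ⟨hb, hgb⟩
          have hab : a ⊓ b ∈ cl := hsl.2 ha hb
          refine ⟨hab, ?_⟩
          have := h2 ⟨a, ha⟩ ⟨b, hb⟩ ⟨a ⊓ b, hab⟩ rfl
          rw [this, hga, hgb, hginf a b ha hb hab]
    funext a
    obtain ⟨a, ha⟩ := a
    obtain ⟨ha', hg⟩ := hTsub ha
    exact hg
end
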